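/- The n operators H_k := Q_{k,k} − Q_{k+1,k+1} (k = 1,…,n) pairwise commute, every monomial x^α is a simultaneous eigenvector of H_1,…,H_n, for every function λ : {1,…,n} → F the simultaneous eigenspace A_λ = { f ∈ A : H_k(f) = λ(k)·f for all k ∈ {1,…,n} } is a finite-dimensional F-subspace of A, and A is the internal direct sum of the nonzero subspaces A_λ. (In other words, A is a weight module for sl(n+1,F) under π_{c,S} with finite-dimensional weight subspaces.) -/

import Mathlib

open MvPolynomial

/-- Multiplication by `x i` as an `F`-linear endomorphism of `A = F[x_1,…,x_n]`. -/
noncomputable def mulX (F : Type*) [Field F] (n : ℕ) (i : Fin n) :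
    Module.End F (MvPolynomial (Fin n) F) :=
  LinearMap.mulLeft F (X i)

/-- The partial derivative `∂_i` as an `F`-linear endomorphism of `A`. -/
noncomputable def pd (F : Type*) [Field F] (n : ℕ) (i : Fin n) :
    Module.End F (MvPolynomial (Fin n) F) :=
  (pderiv i).toLinearMap

/-- The twisted Euler operator `D̃ = Σ_{r>n1} x_r ∂_r − Σ_{i≤n1} x_i ∂_i`
(indices `0,…,n1-1` correspond to the paper's swapped indices `1,…,n1`). -/
noncomputable def Dt (F : Type*) [Field F] (n n1 : ℕ) :
    Module.End F (MvPolynomial (Fin n) F) :=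
  ∑ r : Fin n, if (r : ℕ) < n1 then -(mulX F n r * pd F n r) else mulX F n r * pd F n r

/-- The twisted projective oscillator operators `Q_{i,j}` attached to the swapped
index set `S = {1,…,n1}`; index `n` plays the role of the paper's index `n+1`. -/
noncomputable def Q (F : Type*) [Field F] (n n1 : ℕ) (c : F) (i j : Fin (n + 1)) :
    Module.End F (MvPolynomial (Fin n) F) :=
  if hi : (i : ℕ) < n then
    if hj : (j : ℕ) < n then
      if (i : ℕ) < n1 then
        if (j : ℕ) < n1 then
          -(mulX F n ⟨j, hj⟩ * pd F n ⟨i, hi⟩) - (if i = j then 1 else 0)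
        else pd F n ⟨i, hi⟩ * pd F n ⟨j, hj⟩
      else
        if (j : ℕ) < n1 then -(mulX F n ⟨i, hi⟩ * mulX F n ⟨j, hj⟩)
        else mulX F n ⟨i, hi⟩ * pd F n ⟨j, hj⟩
    else
      if (i : ℕ) < n1 then (Dt F n n1 + (c - n1 - 1) • 1) * pd F n ⟨i, hi⟩
      else mulX F n ⟨i, hi⟩ * (Dt F n n1 + (c - n1) • 1)
  else
    if hj : (j : ℕ) < n then
      if (j : ℕ) < n1 then mulX F n ⟨j, hj⟩
      else -pd F n ⟨j, hj⟩
    else -(Dt F n n1 + (c - n1) • 1)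

/-- The Cartan operators `H_k = Q_{k,k} − Q_{k+1,k+1}`, `k = 1,…,n`. -/
noncomputable def Hsl (F : Type*) [Field F] (n n1 : ℕ) (c : F) (k : Fin n) :
    Module.End F (MvPolynomial (Fin n) F) :=
  Q F n n1 c k.castSucc k.castSucc - Q F n n1 c k.succ k.succ

/-- The simultaneous eigenspace `A_λ = {f | H_k f = λ_k f for all k}`. -/
noncomputable def wtSl (F : Type*) [Field F] (n n1 : ℕ) (c : F) (lam : Fin n → F) :
    Submodule F (MvPolynomial (Fin n) F) :=
  ⨅ k : Fin n, LinearMap.ker (Hsl F n n1 c k - lam k • 1)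

section Aux
variable (F : Type*) [Field F] [CharZero F] (n n1 : ℕ) (c : F)

lemma xpd_monomial (i : Fin n) (α : Fin n →₀ ℕ) :
    (mulX F n i * pd F n i) (monomial α (1 : F)) = (α i : F) • monomial α (1 : F) := by
  show (mulX F n i) ((pd F n i) (monomial α 1)) = _
  rw [pd]
  simp only [Derivation.coeFn_coe, pderiv_monomial, one_mul]
  rw [mulX, LinearMap.mulLeft_apply]
  by_cases h0 : α i = 0
  · simp [h0]
  · have hadd : Finsupp.single i 1 + (α - Finsupp.single i 1) = α := by
      ext j
      rcases eq_or_ne j i with rfl | hj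
      · simp [Finsupp.single_apply]; omega
      · simp [Finsupp.single_apply, hj.symm]
    rw [X, monomial_mul, one_mul, hadd, smul_monomial, smul_eq_mul, mul_one]

lemma Dt_monomial (α : Fin n →₀ ℕ) :
    Dt F n n1 (monomial α (1 : F)) =
      (∑ r : Fin n, if (r : ℕ) < n1 then -(α r : F) else (α r : F)) • monomial α (1 : F) := by
  rw [Dt, LinearMap.sum_apply, Finset.sum_smul]
  refine Finset.sum_congr rfl fun r _ => ?_
  split_ifs with h
  · rw [LinearMap.neg_apply, xpd_monomial, neg_smul]
  · exact xpd_monomial F n r α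

/-- The eigenvalue of `Q i i` on `x^α`. -/
noncomputable def qF (α : Fin n →₀ ℕ) (j : Fin (n + 1)) : F :=
  if h : (j : ℕ) < n then
    (if (j : ℕ) < n1 then -(α ⟨j, h⟩ : F) - 1 else (α ⟨j, h⟩ : F))
  else -((∑ r : Fin n, if (r : ℕ) < n1 then -(α r : F) else (α r : F)) + (c - n1))

/-- The weight of `x^α`. -/
noncomputable def wtF (α : Fin n →₀ ℕ) (k : Fin n) : F :=
  qF F n n1 c α k.castSucc - qF F n n1 c α k.succ

lemma Q_diag_monomial (i : Fin (n + 1)) (α : Fin n →₀ ℕ) :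
    Q F n n1 c i i (monomial α (1 : F)) = qF F n n1 c α i • monomial α (1 : F) := by
  rw [Q, qF]
  by_cases hi : (i : ℕ) < n
  · rw [dif_pos hi, dif_pos hi, dif_pos hi]
    by_cases hi1 : (i : ℕ) < n1
    · rw [if_pos hi1, if_pos hi1, if_pos hi1, if_pos rfl]
      rw [LinearMap.sub_apply, LinearMap.neg_apply, xpd_monomial, sub_smul, neg_smul,
        Module.End.one_apply, one_smul]
    · rw [if_neg hi1, if_neg hi1, if_neg hi1]
      exact xpd_monomial F n ⟨i, hi⟩ α
  · rw [dif_neg hi, dif_neg hi, dif_neg hi]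
    rw [LinearMap.neg_apply, LinearMap.add_apply, Dt_monomial, LinearMap.smul_apply,
      Module.End.one_apply, neg_smul, ← add_smul]

lemma Hsl_monomial (k : Fin n) (α : Fin n →₀ ℕ) :
    Hsl F n n1 c k (monomial α (1 : F)) = wtF F n n1 c α k • monomial α (1 : F) := by
  rw [Hsl, LinearMap.sub_apply, Q_diag_monomial, Q_diag_monomial, wtF, sub_smul]

lemma coeff_Hsl (k : Fin n) (f : MvPolynomial (Fin n) F) (β : Fin n →₀ ℕ) :
    coeff β (Hsl F n n1 c k f) = wtF F n n1 c β k * coeff β f := by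
  induction f using MvPolynomial.induction_on' with
  | monomial u a =>
    have : (monomial u) a = a • (monomial u) (1 : F) := by
      rw [smul_monomial, smul_eq_mul, mul_one]
    rw [this, map_smul, Hsl_monomial]
    rcases eq_or_ne u β with rfl | hu
    · simp [coeff_monomial]; ring
    · simp [coeff_monomial, hu]
  | add p q hp hq => simp [map_add, hp, hq, mul_add]

lemma mem_wtSl (lam : Fin n → F) (f : MvPolynomial (Fin n) F) :
    f ∈ wtSl F n n1 c lam ↔ ∀ β ∈ f.support, wtF F n n1 c β = lam := by
  rw [wtSl]
  simp only [Submodule.mem_iInf, LinearMap.mem_ker, LinearMap.sub_apply, LinearMap.smul_apply,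
    Module.End.one_apply, sub_eq_zero]
  constructor
  · intro h β hβ
    funext k
    have := congrArg (coeff β) (h k)
    rw [coeff_Hsl, coeff_smul, smul_eq_mul] at this
    have hc : coeff β f ≠ 0 := mem_support_iff.mp hβ
    exact mul_right_cancel₀ hc this
  · intro h k
    ext β
    rw [coeff_Hsl, coeff_smul, smul_eq_mul]
    by_cases hβ : β ∈ f.support
    · rw [h β hβ]
    · rw [notMem_support_iff.mp hβ, mul_zero, mul_zero]

end Aux

section Inj
variable (F : Type*) [Field F] [CharZero F] (n n1 : ℕ) (c : F)

/-- Integer version of the diagonal eigenvalues (the constant `c` stripped off). -/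
def qZ (α : Fin n →₀ ℕ) (j : Fin (n + 1)) : ℤ :=
  if h : (j : ℕ) < n then
    (if (j : ℕ) < n1 then -(α ⟨j, h⟩ : ℤ) - 1 else (α ⟨j, h⟩ : ℤ))
  else -(∑ r : Fin n, if (r : ℕ) < n1 then -(α r : ℤ) else (α r : ℤ)) + n1

lemma qF_eq (α : Fin n →₀ ℕ) (j : Fin (n + 1)) :
    qF F n n1 c α j = (qZ n n1 α j : F) - (if (j : ℕ) < n then 0 else c) := by
  rw [qF, qZ]
  split_ifs with h h1 <;> push_cast [apply_ite (Int.cast : ℤ → F)] <;> ring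

lemma wtF_inj (hn : 2 ≤ n) {α β : Fin n →₀ ℕ}
    (h : wtF F n n1 c α = wtF F n n1 c β) : α = β := by
  have hz : ∀ k : Fin n, qZ n n1 α k.castSucc - qZ n n1 α k.succ
      = qZ n n1 β k.castSucc - qZ n n1 β k.succ := by
    intro k
    have h1 := congrFun h k
    rw [wtF, wtF, qF_eq, qF_eq, qF_eq, qF_eq] at h1
    have h2 : ((qZ n n1 α k.castSucc - qZ n n1 α k.succ : ℤ) : F)
        = ((qZ n n1 β k.castSucc - qZ n n1 β k.succ : ℤ) : F) := by
      push_cast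
      linear_combination h1
    exact_mod_cast h2
  set D : Fin (n + 1) → ℤ := fun j => qZ n n1 α j - qZ n n1 β j with hDdef
  have hstep : ∀ k : Fin n, D k.succ = D k.castSucc := by
    intro k; have := hz k; simp only [hDdef]; linarith
  have hconst : ∀ j : Fin (n + 1), D j = D 0 := by
    intro j
    induction j using Fin.induction with
    | zero => rfl
    | succ k ih => rw [hstep k]; exact ih
  have hq : ∀ j : Fin n, (if (j : ℕ) < n1 then -(α j : ℤ) - 1 else (α j : ℤ))
      - (if (j : ℕ) < n1 then -(β j : ℤ) - 1 else (β j : ℤ)) = D 0 := by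
    intro j
    have := hconst j.castSucc
    simpa [hDdef, qZ, j.isLt] using this
  have hlast : (-(∑ r : Fin n, if (r : ℕ) < n1 then -(α r : ℤ) else (α r : ℤ)) + n1)
      - (-(∑ r : Fin n, if (r : ℕ) < n1 then -(β r : ℤ) else (β r : ℤ)) + n1) = D 0 := by
    have := hconst (Fin.last n)
    simpa [hDdef, qZ, Fin.val_last, lt_irrefl] using this
  have hterm : ∀ j : Fin n, (if (j : ℕ) < n1 then -(α j : ℤ) else (α j : ℤ))
      - (if (j : ℕ) < n1 then -(β j : ℤ) else (β j : ℤ)) = D 0 := by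
    intro j; have := hq j; split_ifs at this ⊢ <;> linarith
  have hsum : (∑ r : Fin n, if (r : ℕ) < n1 then -(α r : ℤ) else (α r : ℤ))
      - (∑ r : Fin n, if (r : ℕ) < n1 then -(β r : ℤ) else (β r : ℤ)) = n * D 0 := by
    rw [← Finset.sum_sub_distrib, Finset.sum_congr rfl fun j _ => hterm j]
    simp [mul_comm]
  have hD0 : D 0 = 0 := by
    have h1 : ((n : ℤ) + 1) * D 0 = 0 := by linear_combination -hsum - hlast
    rcases mul_eq_zero.mp h1 with h2 | h2
    · exfalso; omega
    · exact h2
  ext j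
  have hj := hq j
  rw [hD0] at hj
  split_ifs at hj <;> omega

end Inj

/-- the `H_k` pairwise commute, every monomial is a simultaneous eigenvector,
every simultaneous eigenspace is finite-dimensional, and `A` is the internal direct sum of
the nonzero simultaneous eigenspaces: `A` is a weight module with finite-dimensional
weight subspaces. -/
theorem stmt_5 (F : Type*) [Field F] [CharZero F] (n n1 : ℕ) (hn : 2 ≤ n)
    (hn1n : n1 < n) (c : F) :
    (∀ k l : Fin n, Commute (Hsl F n n1 c k) (Hsl F n n1 c l)) ∧
    (∀ α : Fin n →₀ ℕ, ∃ lam : Fin n → F, ∀ k : Fin n,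
        Hsl F n n1 c k (monomial α (1 : F)) = lam k • monomial α (1 : F)) ∧
    (∀ lam : Fin n → F, FiniteDimensional F ↥(wtSl F n n1 c lam)) ∧
    @DirectSum.IsInternal {lam : Fin n → F // wtSl F n n1 c lam ≠ ⊥} _ _
      (Classical.decEq _) _ _ _
      (fun l => wtSl F n n1 c l.1) := by
  refine ⟨?_, ?_, ?_, ?_⟩
  · -- commutativity
    intro k l
    show Hsl F n n1 c k * Hsl F n n1 c l = Hsl F n n1 c l * Hsl F n n1 c k
    apply (basisMonomials (Fin n) F).ext
    intro α
    have hb : (basisMonomials (Fin n) F) α = monomial α (1 : F) :=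
      congrFun (coe_basisMonomials (Fin n) F) α
    rw [hb, Module.End.mul_apply, Module.End.mul_apply, Hsl_monomial F n n1 c l α,
      Hsl_monomial F n n1 c k α, map_smul, map_smul, Hsl_monomial, Hsl_monomial, smul_comm]
  · -- monomials are simultaneous eigenvectors
    intro α
    exact ⟨wtF F n n1 c α, fun k => Hsl_monomial F n n1 c k α⟩
  · -- finite-dimensional weight spaces
    intro lam
    by_cases h : ∃ α, wtF F n n1 c α = lam
    · obtain ⟨α, hα⟩ := h
      have hle : wtSl F n n1 c lam ≤ Submodule.span F {monomial α (1 : F)} := by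
        intro f hf
        rw [mem_wtSl] at hf
        have hsupp : ∀ β ∈ f.support, β = α := fun β hβ =>
          wtF_inj F n n1 c hn (by rw [hf β hβ, hα])
        have hfe : f = coeff α f • monomial α (1 : F) := by
          ext β
          rw [coeff_smul, coeff_monomial, smul_eq_mul]
          rcases eq_or_ne β α with rfl | hβ
          · simp
          · have hns : β ∉ f.support := fun hb => hβ (hsupp β hb)
            rw [notMem_support_iff.mp hns, if_neg fun hh => hβ hh.symm, mul_zero]
        rw [hfe]
        exact Submodule.smul_mem _ _ (Submodule.mem_span_singleton_self _)
      exact Submodule.finiteDimensional_of_le hle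
    · have hbot : wtSl F n n1 c lam = ⊥ := by
        rw [eq_bot_iff]
        intro f hf
        rw [mem_wtSl] at hf
        have hse : f.support = ∅ :=
          Finset.eq_empty_of_forall_notMem fun β hβ => h ⟨β, hf β hβ⟩
        simpa [Submodule.mem_bot] using support_eq_empty.mp hse
      rw [hbot]
      infer_instance
  · -- internal direct sum
    letI : DecidableEq {lam : Fin n → F // wtSl F n n1 c lam ≠ ⊥} := Classical.decEq _
    rw [DirectSum.isInternal_submodule_iff_iSupIndep_and_iSup_eq_top]
    constructor
    · intro i
      have hK : (⨆ (j : {lam : Fin n → F // wtSl F n n1 c lam ≠ ⊥}) (_ : j ≠ i),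
            wtSl F n n1 c j.1)
          ≤ ⨅ (α : Fin n →₀ ℕ) (_ : wtF F n n1 c α = i.1), LinearMap.ker (lcoeff F α) := by
        refine iSup_le fun j => iSup_le fun hj => ?_
        intro f hf
        simp only [Submodule.mem_iInf, LinearMap.mem_ker, lcoeff_apply]
        intro α hα
        by_contra hc
        have hmem : α ∈ f.support := mem_support_iff.mpr hc
        have hw := (mem_wtSl F n n1 c j.1 f).mp hf α hmem
        exact hj (Subtype.ext (by rw [← hw, hα]))
      rw [Submodule.disjoint_def]
      intro f hf1 hf2
      have hf2' := hK hf2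
      simp only [Submodule.mem_iInf, LinearMap.mem_ker, lcoeff_apply] at hf2'
      rw [mem_wtSl] at hf1
      ext β
      rw [coeff_zero]
      by_cases hβ : β ∈ f.support
      · exact hf2' β (hf1 β hβ)
      · exact notMem_support_iff.mp hβ
    · rw [eq_top_iff, ← (basisMonomials (Fin n) F).span_eq, Submodule.span_le]
      rintro _ ⟨α, rfl⟩
      have hb : (basisMonomials (Fin n) F) α = monomial α (1 : F) :=
        congrFun (coe_basisMonomials (Fin n) F) α
      rw [SetLike.mem_coe, hb]
      have hmem : monomial α (1 : F) ∈ wtSl F n n1 c (wtF F n n1 c α) := by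
        rw [mem_wtSl]
        intro β hβ
        have hba : α = β := by simpa [support_monomial] using hβ
        rw [← hba]
      have hne : wtSl F n n1 c (wtF F n n1 c α) ≠ ⊥ := by
        intro hbot
        rw [hbot, Submodule.mem_bot, monomial_eq_zero] at hmem
        exact one_ne_zero hmem
      exact le_iSup (fun l : {lam : Fin n → F // wtSl F n n1 c lam ≠ ⊥} =>
        wtSl F n n1 c l.1) ⟨_, hne⟩ hmem
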